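/- Let Δ be a simplicial complex and let 𝒞 be an ordered proper vertex k-colouring of Δ. The index vector poset P(Δ, 𝒞) is a finite order ideal of ℕ^k (under the componentwise partial order) if and only if 𝒞 is a nested colouring endowed with the nesting order. Moreover, every finite order ideal of ℕ^k arises as P(Δ, 𝒞) for some simplicial complex Δ and nested colouring 𝒞 with the nesting order. -/

import Mathlib

open MvPolynomial

/-- A simplicial complex on a vertex type `V`: a collection of finite subsets (faces)
containing the empty set and closed under taking subsets. -/
structure SimpComplex (V : Type) where
  faces : Set (Finset V)
  empty_mem : ∅ ∈ faces
  down_closed : ∀ {σ τ : Finset V}, σ ∈ faces → τ ⊆ σ → τ ∈ faces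

namespace SimpComplex

variable {V : Type}

/-- `A` is an independent set of `Δ`: no two distinct members lie in a common face. -/
def IsIndep (Δ : SimpComplex V) (A : Set V) : Prop :=
  ∀ u ∈ A, ∀ v ∈ A, u ≠ v → ∀ σ ∈ Δ.faces, ¬(u ∈ σ ∧ v ∈ σ)

/-- The link of a vertex `v` in `Δ`. -/
def link [DecidableEq V] (Δ : SimpComplex V) (v : V) : Set (Finset V) :=
  {τ | τ ∈ Δ.faces ∧ v ∉ τ ∧ insert v τ ∈ Δ.faces}

end SimpComplex

/-- A family of finsets indexed by `Fin k` is a partition of the vertex set. -/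
def IsPartition {V : Type} {k : ℕ} (C : Fin k → Finset V) : Prop :=
  ∀ v : V, ∃! i, v ∈ C i

/-- A proper vertex `k`-colouring of a simplicial complex: a partition into independent sets. -/
def IsProperColouring {V : Type} {k : ℕ} (Δ : SimpComplex V) (C : Fin k → Finset V) : Prop :=
  IsPartition C ∧ ∀ i, Δ.IsIndep (C i : Set V)

/-- An ordered proper vertex `k`-colouring, given by a duplicate-free list (recording the
linear order) for each colour class; the classes partition the vertices and are independent. -/
def IsOrderedColouring {V : Type} {k : ℕ} (Δ : SimpComplex V) (C : Fin k → List V) : Prop :=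
  (∀ i, (C i).Nodup) ∧ (∀ v : V, ∃! i, v ∈ C i) ∧ (∀ i, Δ.IsIndep {v | v ∈ C i})

/-- The given linear orders on the colour classes are nesting orders: within a class,
if `v` comes before `u` then `link(u) ⊆ link(v)`.  (Thus the colouring is nested and is
endowed with the nesting order.) -/
def IsNestingOrdered {V : Type} [DecidableEq V] {k : ℕ} (Δ : SimpComplex V)
    (C : Fin k → List V) : Prop :=
  ∀ i, (C i).Pairwise (fun v u => Δ.link u ⊆ Δ.link v)

/-- The index vector of a set `σ` with respect to the ordered colouring `C`:
`eVec C σ i = j` iff the (unique) element of `σ ∩ C i` is the `j`-th element of the list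
`C i` (counting from 1), and `0` if `σ ∩ C i = ∅`. -/
def eVec {V : Type} [DecidableEq V] {k : ℕ} (C : Fin k → List V) (σ : Finset V)
    (i : Fin k) : ℕ :=
  if (C i).any (fun v => decide (v ∈ σ)) then
    (C i).findIdx (fun v => decide (v ∈ σ)) + 1
  else 0

/-- The uniform monomial of a face `σ`:  `∏ i, x_i ^ (#C_i - e_i(σ)) * y_i ^ (e_i(σ))`,
where `x_i = X (Sum.inl i)` and `y_i = X (Sum.inr i)`. -/
noncomputable def uniformMonomial (K : Type) [Field K] {V : Type} [DecidableEq V] {k : ℕ}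
    (C : Fin k → List V) (σ : Finset V) : MvPolynomial (Fin k ⊕ Fin k) K :=
  ∏ i : Fin k, (X (Sum.inl i) ^ ((C i).length - eVec C σ i) * X (Sum.inr i) ^ eVec C σ i)

/-- The uniform face ideal of `Δ` with respect to the ordered colouring `C`. -/
noncomputable def uniformFaceIdeal (K : Type) [Field K] {V : Type} [DecidableEq V] {k : ℕ}
    (Δ : SimpComplex V) (C : Fin k → List V) : Ideal (MvPolynomial (Fin k ⊕ Fin k) K) :=
  Ideal.span {m | ∃ σ ∈ Δ.faces, m = uniformMonomial K C σ}

/-- The index vector poset `P(Δ,𝒞)` of a complex with respect to an ordered colouring: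
the set of index vectors of faces, as a subset of `ℕ^k` with the componentwise order. -/
def indexSet {V : Type} [DecidableEq V] {k : ℕ} (Δ : SimpComplex V)
    (C : Fin k → List V) : Set (Fin k → ℕ) :=
  {e | ∃ σ ∈ Δ.faces, e = fun i => eVec C σ i}

/-- A subset of `ℕ^k` is an order ideal for the componentwise partial order. -/
def IsOrderIdealNk {k : ℕ} (S : Set (Fin k → ℕ)) : Prop :=
  ∀ b ∈ S, ∀ a : Fin k → ℕ, a ≤ b → a ∈ S

/-! A face meets every colour class at most once, so it is determined by its index vector.
Lowering the `i`-th index of a face from `j + 1` to `j` means trading its vertex `(C i)[j]`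
for `(C i)[j - 1]` (or dropping it when `j = 0`), and this can be done in every face
containing `(C i)[j]` exactly when `link (C i)[j] ⊆ link (C i)[j - 1]`. Since a set of
index vectors is an order ideal iff it is closed under lowering one coordinate by one, this
is the nesting condition. Conversely, a finite order ideal `S` is realised on `k` blocks of
`N` vertices, `N` bounding the entries of `S`: for each `e ∈ S` take as a face the set with
the `e i`-th vertex of block `i` for every `i` with `e i ≠ 0`, and close downwards. -/

lemma SimpComplex.IsIndep.subsingleton_inter {V : Type} {Δ : SimpComplex V} {A : Set V}
    (hA : Δ.IsIndep A) {σ : Finset V} (hσ : σ ∈ Δ.faces) : (A ∩ ↑σ).Subsingleton :=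
  fun u hu v hv => by_contra fun huv => hA u hu.1 v hv.1 huv σ hσ ⟨hu.2, hv.2⟩

lemma SimpComplex.insert_erase_mem_faces {V : Type} [DecidableEq V] {Δ : SimpComplex V}
    {σ : Finset V} {u v : V} (hσ : σ ∈ Δ.faces) (hu : u ∈ σ) (hl : Δ.link u ⊆ Δ.link v) :
    insert v (σ.erase u) ∈ Δ.faces :=
  (hl ⟨Δ.down_closed hσ (σ.erase_subset u), σ.notMem_erase u, by rwa [σ.insert_erase hu]⟩).2.2

section eVec

variable {V : Type} [DecidableEq V] {k : ℕ} {C : Fin k → List V} {σ τ : Finset V} {i : Fin k}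

lemma eVec_eq_zero_iff : eVec C σ i = 0 ↔ ∀ v ∈ C i, v ∉ σ := by
  unfold eVec
  split_ifs with h
  · simp only [List.any_eq_true, decide_eq_true_eq] at h
    obtain ⟨v, hv, hvσ⟩ := h
    simpa using ⟨v, hv, hvσ⟩
  · simpa using h

lemma eVec_eq_add_one_iff {j : ℕ} :
    eVec C σ i = j + 1 ↔
      ∃ hj : j < (C i).length, (C i)[j] ∈ σ ∧ ∀ l (hl : l < j), (C i)[l] ∉ σ := by
  unfold eVec
  split_ifs with h
  · by_cases hj : j < (C i).length
    · simp [List.findIdx_eq hj, hj]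
    · refine iff_of_false ?_ fun ⟨hj', _⟩ => hj hj'
      rintro ⟨⟩
      exact hj (List.findIdx_lt_length_of_exists (by simpa using h))
  · simp only [List.any_eq_true, decide_eq_true_eq, not_exists, not_and] at h
    exact iff_of_false (by simp) fun ⟨hj, hmem, _⟩ => h _ (List.getElem_mem hj) hmem

lemma eVec_congr (h : ∀ v ∈ C i, v ∈ σ ↔ v ∈ τ) : eVec C σ i = eVec C τ i := by
  rcases hτ : eVec C τ i with _ | j
  · exact eVec_eq_zero_iff.mpr fun v hv => (h v hv).not.mpr (eVec_eq_zero_iff.mp hτ v hv)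
  · obtain ⟨hj, hmem, hmin⟩ := eVec_eq_add_one_iff.mp hτ
    exact eVec_eq_add_one_iff.mpr ⟨hj, (h _ (List.getElem_mem hj)).mpr hmem,
      fun l hl => (h _ (List.getElem_mem _)).not.mpr (hmin l hl)⟩

lemma eVec_eq_idxOf_add_one_iff (hσ : ({v | v ∈ C i} ∩ ↑σ : Set V).Subsingleton) {v : V}
    (hv : v ∈ C i) : eVec C σ i = (C i).idxOf v + 1 ↔ v ∈ σ := by
  have hlt : (C i).idxOf v < (C i).length := List.idxOf_lt_length_iff.mpr hv
  rw [eVec_eq_add_one_iff]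
  refine ⟨fun ⟨_, hvσ, _⟩ => by rwa [List.getElem_idxOf] at hvσ, fun hvσ => ?_⟩
  refine ⟨hlt, by rwa [List.getElem_idxOf], fun l hl hlσ => ?_⟩
  have hne : (C i)[l] ≠ v := by simpa using List.not_of_lt_findIdx (p := (· == v)) hl
  exact hne (hσ ⟨List.getElem_mem _, hlσ⟩ ⟨hv, hvσ⟩)

end eVec

lemma IsOrderedColouring.eq_of_mem {V : Type} {k : ℕ} {Δ : SimpComplex V}
    {C : Fin k → List V} (hC : IsOrderedColouring Δ C) {v : V} {i j : Fin k}
    (hi : v ∈ C i) (hj : v ∈ C j) : i = j :=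
  (hC.2.1 v).unique hi hj

section IndexSet

variable {V : Type} [DecidableEq V] {k : ℕ} {Δ : SimpComplex V} {C : Fin k → List V}

lemma eVec_update_of_forall_ne {σ τ : Finset V} {i : Fin k}
    (h : ∀ j ≠ i, ∀ v ∈ C j, v ∈ τ ↔ v ∈ σ) :
    (fun j => eVec C τ j) = Function.update (fun j => eVec C σ j) i (eVec C τ i) := by
  funext j
  rcases eq_or_ne j i with rfl | hj
  · simp
  · rw [Function.update_of_ne hj]
    exact eVec_congr (h j hj)

lemma SimpComplex.IsIndep.notMem_of_mem_link {A : Set V} (hA : Δ.IsIndep A) {u w : V}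
    {τ : Finset V} (hu : u ∈ A) (hw : w ∈ A) (hτ : τ ∈ Δ.link u) : w ∉ τ := fun hwτ =>
  hτ.2.1 <| hA.subsingleton_inter hτ.2.2 ⟨hw, Finset.mem_insert_of_mem hwτ⟩
    ⟨hu, Finset.mem_insert_self u τ⟩ ▸ hwτ

lemma IsOrderedColouring.eVec_eq_idxOf_add_one_iff (hC : IsOrderedColouring Δ C)
    {σ : Finset V} (hσ : σ ∈ Δ.faces) {v : V} {i : Fin k} (hv : v ∈ C i) :
    eVec C σ i = (C i).idxOf v + 1 ↔ v ∈ σ :=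
  _root_.eVec_eq_idxOf_add_one_iff ((hC.2.2 i).subsingleton_inter hσ) hv

lemma IsOrderedColouring.update_zero_mem_indexSet (hC : IsOrderedColouring Δ C)
    {e : Fin k → ℕ} (he : e ∈ indexSet Δ C) (i : Fin k) :
    Function.update e i 0 ∈ indexSet Δ C := by
  obtain ⟨σ, hσ, rfl⟩ := he
  have hoff : ∀ j ≠ i, ∀ v ∈ C j, v ∈ σ.filter (· ∉ C i) ↔ v ∈ σ := fun j hj v hv => by
    simpa using fun _ hvi => hj (hC.eq_of_mem hv hvi)
  refine ⟨_, Δ.down_closed hσ (σ.filter_subset (· ∉ C i)), ?_⟩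
  rw [eVec_update_of_forall_ne hoff, eVec_eq_zero_iff.mpr (by simp +contextual)]

lemma IsOrderedColouring.update_mem_indexSet_of_nested (hC : IsOrderedColouring Δ C)
    (hNest : IsNestingOrdered Δ C) {e : Fin k → ℕ} (he : e ∈ indexSet Δ C) {i : Fin k}
    {j : ℕ} (hj : e i = j + 2) : Function.update e i (j + 1) ∈ indexSet Δ C := by
  obtain ⟨σ, hσ, rfl⟩ := he
  obtain ⟨hlt, hu, -⟩ := eVec_eq_add_one_iff.mp hj
  have hlink := List.pairwise_iff_getElem.mp (hNest i) j (j + 1) (by omega) hlt (by omega)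
  have hτ := Δ.insert_erase_mem_faces hσ hu hlink
  have hτi := (hC.eVec_eq_idxOf_add_one_iff hτ (List.getElem_mem _)).mpr
    (Finset.mem_insert_self _ _)
  rw [(hC.1 i).idxOf_getElem] at hτi
  have hoff : ∀ l ≠ i, ∀ v ∈ C l, v ∈ insert (C i)[j] (σ.erase (C i)[j + 1]) ↔ v ∈ σ :=
    fun l hl v hv => by
      have hne : ∀ m (hm : m < (C i).length), v ≠ (C i)[m] := fun m hm hvm =>
        hl (hC.eq_of_mem hv (hvm ▸ List.getElem_mem hm))
      simp [hne]
  refine ⟨_, hτ, ?_⟩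
  rw [eVec_update_of_forall_ne hoff, hτi]

lemma IsOrderedColouring.update_pred_mem_indexSet (hC : IsOrderedColouring Δ C)
    (hNest : IsNestingOrdered Δ C) {e : Fin k → ℕ} (he : e ∈ indexSet Δ C) (i : Fin k) :
    Function.update e i (e i - 1) ∈ indexSet Δ C := by
  rcases h : e i with _ | _ | j
  · rwa [Nat.zero_sub, ← h, Function.update_eq_self]
  · exact hC.update_zero_mem_indexSet he i
  · exact hC.update_mem_indexSet_of_nested hNest he h

lemma isOrderIdealNk_of_update_pred_mem {k : ℕ} {S : Set (Fin k → ℕ)}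
    (h : ∀ e ∈ S, ∀ i, Function.update e i (e i - 1) ∈ S) : IsOrderIdealNk S := by
  intro b
  induction b using WellFoundedLT.induction with
  | _ b ih =>
  intro hb a hab
  obtain rfl | hlt := eq_or_lt_of_le hab
  · exact hb
  obtain ⟨i, hi⟩ : ∃ i, a i < b i := (Pi.lt_def.mp hlt).2
  refine ih _ (update_lt_self_iff.mpr (by omega)) (h b hb i) a ?_
  exact le_update_iff.mpr ⟨by omega, fun j _ => hab j⟩

/-- If `τ ∈ link (C i)[q]` and `p < q`, lowering the `i`-th index of `insert (C i)[q] τ` to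
`p + 1` yields a face containing `insert (C i)[p] τ`. -/
lemma IsOrderedColouring.isNestingOrdered_of_isOrderIdealNk (hC : IsOrderedColouring Δ C)
    (hI : IsOrderIdealNk (indexSet Δ C)) : IsNestingOrdered Δ C := by
  intro i
  refine List.pairwise_iff_getElem.mpr fun p q hp hq hpq τ hτ => ?_
  have hτi : ∀ w ∈ C i, w ∉ τ := fun w hw =>
    (hC.2.2 i).notMem_of_mem_link (List.getElem_mem hq) hw hτ
  have hσi : eVec C (insert (C i)[q] τ) i = q + 1 := by
    have := (hC.eVec_eq_idxOf_add_one_iff hτ.2.2 (List.getElem_mem hq)).mpr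
      (Finset.mem_insert_self _ _)
    rwa [(hC.1 i).idxOf_getElem] at this
  obtain ⟨σ', hσ', he'⟩ := hI _ ⟨_, hτ.2.2, rfl⟩
    (Function.update (fun j => eVec C (insert (C i)[q] τ) j) i (p + 1))
    (update_le_self_iff.mpr (by omega))
  have hsub : insert (C i)[p] τ ⊆ σ' := by
    intro w hw
    obtain ⟨j, hwj, -⟩ := hC.2.1 w
    rw [← hC.eVec_eq_idxOf_add_one_iff hσ' hwj, ← congrFun he' j]
    rcases Finset.mem_insert.mp hw with rfl | hwτ
    · obtain rfl := hC.eq_of_mem hwj (List.getElem_mem hp)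
      rw [Function.update_self, (hC.1 j).idxOf_getElem]
    · have hji : j ≠ i := fun h => hτi w (h ▸ hwj) hwτ
      rw [Function.update_of_ne hji]
      exact (hC.eVec_eq_idxOf_add_one_iff hτ.2.2 hwj).mpr (Finset.mem_insert_of_mem hwτ)
  exact ⟨hτ.1, hτi _ (List.getElem_mem hp), Δ.down_closed hσ' hsub⟩

lemma indexSet_finite [Finite V] (Δ : SimpComplex V) (C : Fin k → List V) :
    (indexSet Δ C).Finite :=
  (Set.finite_range fun σ : Finset V => fun i => eVec C σ i).subset
    fun _ ⟨σ, _, he⟩ => ⟨σ, he.symm⟩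

theorem IsOrderedColouring.finite_and_isOrderIdealNk_indexSet_iff [Finite V]
    (hC : IsOrderedColouring Δ C) :
    ((indexSet Δ C).Finite ∧ IsOrderIdealNk (indexSet Δ C)) ↔ IsNestingOrdered Δ C :=
  ⟨fun h => hC.isNestingOrdered_of_isOrderIdealNk h.2, fun hNest => ⟨indexSet_finite Δ C,
    isOrderIdealNk_of_update_pred_mem fun _ he i => hC.update_pred_mem_indexSet hNest he i⟩⟩

end IndexSet

section Realization

variable {V : Type} [DecidableEq V] [Fintype V] {k : ℕ} {C : Fin k → List V}

def indexFace (C : Fin k → List V) (e : Fin k → ℕ) : Finset V :=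
  Finset.univ.filter fun v => ∃ i, v ∈ C i ∧ e i = (C i).idxOf v + 1

lemma mem_indexFace_iff (hP : ∀ v : V, ∃! i, v ∈ C i) {e : Fin k → ℕ} {v : V} {i : Fin k}
    (hv : v ∈ C i) : v ∈ indexFace C e ↔ e i = (C i).idxOf v + 1 := by
  simp only [indexFace, Finset.mem_filter, Finset.mem_univ, true_and]
  exact ⟨fun ⟨j, hvj, he⟩ => (hP v).unique hvj hv ▸ he, fun he => ⟨i, hv, he⟩⟩

lemma indexFace_subsingleton_inter (hP : ∀ v : V, ∃! i, v ∈ C i) (e : Fin k → ℕ)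
    (i : Fin k) : ({v | v ∈ C i} ∩ ↑(indexFace C e) : Set V).Subsingleton := by
  rintro v ⟨hv, hve⟩ w ⟨hw, hwe⟩
  rw [Finset.mem_coe, mem_indexFace_iff hP hv] at hve
  rw [Finset.mem_coe, mem_indexFace_iff hP hw, hve, Nat.add_right_cancel_iff] at hwe
  exact (List.idxOf_inj hv).mp hwe

lemma eVec_indexFace (hN : ∀ i, (C i).Nodup) (hP : ∀ v : V, ∃! i, v ∈ C i)
    {e : Fin k → ℕ} {i : Fin k} (he : e i ≤ (C i).length) : eVec C (indexFace C e) i = e i := by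
  rcases h : e i with _ | j
  · exact eVec_eq_zero_iff.mpr fun v hv hve => by simp [(mem_indexFace_iff hP hv).mp hve] at h
  · have hj : j < (C i).length := by omega
    have hmem : (C i)[j] ∈ indexFace C e := by
      rw [mem_indexFace_iff hP (List.getElem_mem hj), (hN i).idxOf_getElem, h]
    have := (eVec_eq_idxOf_add_one_iff (indexFace_subsingleton_inter hP e i)
      (List.getElem_mem hj)).mpr hmem
    rwa [(hN i).idxOf_getElem] at this

variable (C) in
def indexComplex (S : Set (Fin k → ℕ)) (hS : S.Nonempty) : SimpComplex V where
  faces := {σ | ∃ e ∈ S, σ ⊆ indexFace C e}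
  empty_mem := ⟨hS.some, hS.some_mem, Finset.empty_subset _⟩
  down_closed := fun ⟨e, he, hσ⟩ hτ => ⟨e, he, hτ.trans hσ⟩

lemma isOrderedColouring_indexComplex (hN : ∀ i, (C i).Nodup) (hP : ∀ v : V, ∃! i, v ∈ C i)
    {S : Set (Fin k → ℕ)} (hS : S.Nonempty) : IsOrderedColouring (indexComplex C S hS) C :=
  ⟨hN, hP, fun i _ hu _ hv huv _ ⟨e, _, hσ⟩ ⟨huσ, hvσ⟩ =>
    huv (indexFace_subsingleton_inter hP e i ⟨hu, hσ huσ⟩ ⟨hv, hσ hvσ⟩)⟩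

lemma indexSet_indexComplex (hN : ∀ i, (C i).Nodup) (hP : ∀ v : V, ∃! i, v ∈ C i)
    {S : Set (Fin k → ℕ)} (hS : IsOrderIdealNk S) (hne : S.Nonempty)
    (hlen : ∀ e ∈ S, ∀ i, e i ≤ (C i).length) : indexSet (indexComplex C S hne) C = S := by
  ext e'
  constructor
  · rintro ⟨σ, ⟨e, he, hσ⟩, rfl⟩
    refine hS e he _ fun i => ?_
    rcases h : eVec C σ i with _ | j
    · exact Nat.zero_le _
    · obtain ⟨hj, hmem, -⟩ := eVec_eq_add_one_iff.mp h
      rw [(mem_indexFace_iff hP (List.getElem_mem hj)).mp (hσ hmem), (hN i).idxOf_getElem]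
  · intro he
    exact ⟨indexFace C e', ⟨e', he, subset_rfl⟩,
      funext fun i => (eVec_indexFace hN hP (hlen e' he i)).symm⟩

end Realization

def blockColouring (k N : ℕ) : Fin k → List (Fin (k * N)) :=
  fun i => List.ofFn fun j => finProdFinEquiv (i, j)

lemma mem_blockColouring {k N : ℕ} {v : Fin (k * N)} {i : Fin k} :
    v ∈ blockColouring k N i ↔ (finProdFinEquiv.symm v).1 = i := by
  simp only [blockColouring, List.mem_ofFn]
  constructor
  · rintro ⟨j, rfl⟩
    simp
  · rintro rfl
    exact ⟨_, Equiv.apply_symm_apply _ v⟩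

lemma blockColouring_nodup (k N : ℕ) (i : Fin k) : (blockColouring k N i).Nodup :=
  List.nodup_ofFn_ofInjective (finProdFinEquiv.injective.comp (Prod.mk_right_injective i))

lemma existsUnique_mem_blockColouring {k N : ℕ} (v : Fin (k * N)) :
    ∃! i, v ∈ blockColouring k N i :=
  ⟨_, mem_blockColouring.mpr rfl, fun _ h => (mem_blockColouring.mp h).symm⟩

lemma length_blockColouring (k N : ℕ) (i : Fin k) : (blockColouring k N i).length = N :=
  List.length_ofFn

/-- Proposition 6.2: the index vector poset `P(Δ,𝒞)` is a finite order
ideal of `ℕ^k` iff `𝒞` is a nested colouring endowed with the nesting order; moreover every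
finite (nonempty) order ideal of `ℕ^k` arises this way. -/
theorem stmt11 {n k : ℕ} (Δ : SimpComplex (Fin n))
    (C : Fin k → List (Fin n)) (hC : IsOrderedColouring Δ C) :
    (((indexSet Δ C).Finite ∧ IsOrderIdealNk (indexSet Δ C)) ↔ IsNestingOrdered Δ C) ∧
    (∀ S : Set (Fin k → ℕ), S.Finite → S.Nonempty → IsOrderIdealNk S →
      ∃ (n' : ℕ) (Δ' : SimpComplex (Fin n')) (C' : Fin k → List (Fin n')),
        IsOrderedColouring Δ' C' ∧ IsNestingOrdered Δ' C' ∧ indexSet Δ' C' = S) := by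
  refine ⟨hC.finite_and_isOrderIdealNk_indexSet_iff, fun S hSfin hSne hS => ?_⟩
  obtain ⟨M, hM⟩ := hSfin.bddAbove
  set N := Finset.univ.sup M
  have hlen : ∀ e ∈ S, ∀ i, e i ≤ (blockColouring k N i).length := fun e he i => by
    rw [length_blockColouring]
    exact (hM he i).trans (Finset.le_sup (Finset.mem_univ i))
  have hC' := isOrderedColouring_indexComplex (blockColouring_nodup k N)
    existsUnique_mem_blockColouring hSne
  have hIdx := indexSet_indexComplex (blockColouring_nodup k N)
    existsUnique_mem_blockColouring hS hSne hlen
  exact ⟨k * N, _, _, hC', hC'.isNestingOrdered_of_isOrderIdealNk (hIdx.symm ▸ hS), hIdx⟩
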